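/- The number of planted planar forests with $k$ ordered trees and $n$ labeled-in-traversal-order nodes whose offspring sequence is a given multiset is determined as follows: among all $n$ cyclic rotations of any fixed sequence $(s_0,\ldots,s_{n-1})$ of non-negative integers summing to $n-k$, exactly $k$ rotations yield valid forest traversal sequences, and distinct valid rotations correspond to distinct forests (up to cyclic relabeling of nodes). -/

import Mathlib

/-- A planar rooted tree: a node together with a linearly ordered list of subtrees. -/
inductive PTree : Type where
  | node : List PTree → PTree

mutual
/-- Depth-first traversal offspring sequence of a planar rooted tree. -/
def PTree.dfs : PTree → List ℕ
  | .node ts => ts.length :: PTree.dfsList ts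
/-- Depth-first traversal offspring sequence of a list of planar rooted trees. -/
def PTree.dfsList : List PTree → List ℕ
  | [] => []
  | t :: ts => t.dfs ++ PTree.dfsList ts
end

/-- Depth-first traversal offspring sequence of a planted planar forest. -/
def forestDfs (F : List PTree) : List ℕ := PTree.dfsList F

/-!
Read cyclically, a sequence `s` of length `n` and sum `n - k` defines the Łukasiewicz walk
`m ↦ ∑_{j<m} (s_{j mod n} - 1)`, which steps down by at most one and drops by exactly `k`
over every period. The rotation of `s` starting at `i` codes a forest of `k` trees iff the
walk stays, on the window `[i, i + n)`, strictly above the value it reaches at time `i + n`;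
as every earlier value recurs `k` lower one period later, this says that `n + i` is a strict
record minimum of the walk. Because the walk goes down one step at a time, the number of records up to time `m`
is one plus the depth of the minimum reached so far, and one period deepens that minimum by
exactly `k`; so the window `[n, 2n)` holds exactly `k` records.
-/

open Finset

theorem PTree.dfsList_append (a b : List PTree) :
    PTree.dfsList (a ++ b) = PTree.dfsList a ++ PTree.dfsList b := by
  induction a with
  | nil => simp [PTree.dfsList]
  | cons t ts ih => simp [PTree.dfsList, ih]

theorem PTree.dfsList_node_cons (cs ts : List PTree) :
    PTree.dfsList (PTree.node cs :: ts) = cs.length :: PTree.dfsList (cs ++ ts) := by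
  simp [PTree.dfsList, PTree.dfs, PTree.dfsList_append]

-- `k + (u.take ℓ).sum - ℓ` counts the trees still to be traversed after `ℓ` nodes.
def IsForestDfs (k : ℕ) (u : List ℕ) : Prop :=
  u.sum + k = u.length ∧ ∀ ℓ < u.length, ℓ < (u.take ℓ).sum + k

theorem isForestDfs_nil_iff (k : ℕ) : IsForestDfs k [] ↔ k = 0 := by
  simp [IsForestDfs]

theorem isForestDfs_cons_iff (k c : ℕ) (u : List ℕ) :
    IsForestDfs k (c :: u) ↔ 0 < k ∧ IsForestDfs (k - 1 + c) u := by
  simp only [IsForestDfs, List.sum_cons, List.length_cons]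
  constructor
  · rintro ⟨hsum, hpre⟩
    have hk : 0 < k := by simpa using hpre 0 (by omega)
    refine ⟨hk, by omega, fun ℓ hℓ => ?_⟩
    have := hpre (ℓ + 1) (by omega)
    simp only [List.take_succ_cons, List.sum_cons] at this
    omega
  · rintro ⟨hk, hsum, hpre⟩
    refine ⟨by omega, fun ℓ hℓ => ?_⟩
    cases ℓ with
    | zero => simpa using hk
    | succ ℓ =>
      have := hpre ℓ (by omega)
      simp only [List.take_succ_cons, List.sum_cons]
      omega

theorem isForestDfs_dfsList : ∀ F : List PTree, IsForestDfs F.length (PTree.dfsList F)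
  | [] => (isForestDfs_nil_iff 0).2 rfl
  | PTree.node cs :: ts => by
    have ih := isForestDfs_dfsList (cs ++ ts)
    rw [PTree.dfsList_node_cons, isForestDfs_cons_iff]
    refine ⟨by simp, ?_⟩
    convert ih using 1
    simp only [List.length_cons, List.length_append]
    omega
termination_by F => (PTree.dfsList F).length
decreasing_by simp [PTree.dfsList_node_cons]

theorem exists_forest_of_isForestDfs :
    ∀ (u : List ℕ) (k : ℕ), IsForestDfs k u → ∃ F : List PTree, F.length = k ∧ forestDfs F = u
  | [], k, hu => ⟨[], ((isForestDfs_nil_iff k).1 hu).symm, rfl⟩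
  | c :: u, k, hu => by
    obtain ⟨hk, hu⟩ := (isForestDfs_cons_iff k c u).1 hu
    obtain ⟨F, hlen, hdfs⟩ := exists_forest_of_isForestDfs u _ hu
    -- the first root takes the first `c` trees of the remaining forest as its subtrees
    refine ⟨PTree.node (F.take c) :: F.drop c, ?_, ?_⟩
    · simp only [List.length_cons, List.length_drop, hlen]
      omega
    · rw [forestDfs, PTree.dfsList_node_cons, List.take_append_drop, ← forestDfs, hdfs,
        List.length_take, hlen, min_eq_left (by omega)]

theorem exists_forest_iff_isForestDfs (k : ℕ) (u : List ℕ) :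
    (∃ F : List PTree, F.length = k ∧ forestDfs F = u) ↔ IsForestDfs k u := by
  constructor
  · rintro ⟨F, rfl, rfl⟩
    exact isForestDfs_dfsList F
  · exact exists_forest_of_isForestDfs u k

def IsRecordMin (f : ℕ → ℤ) (m : ℕ) : Prop :=
  ∀ j < m, f m < f j

open Classical in
theorem card_isRecordMin_range_succ {f : ℕ → ℤ} (hstep : ∀ m, f m - 1 ≤ f (m + 1)) (m : ℕ) :
    (((range (m + 1)).filter (IsRecordMin f)).card : ℤ) =
      f 0 + 1 - (range (m + 1)).inf' nonempty_range_add_one f := by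
  induction m with
  | zero =>
    have hrec : IsRecordMin f 0 := fun j hj => absurd hj (Nat.not_lt_zero j)
    simp only [zero_add, range_one, filter_singleton, if_pos hrec, card_singleton,
      inf'_singleton]
    push_cast
    ring
  | succ m ih =>
    have hrec_iff :
        IsRecordMin f (m + 1) ↔ f (m + 1) < (range (m + 1)).inf' nonempty_range_add_one f := by
      simp [IsRecordMin, lt_inf'_iff]
    have hmin_le : (range (m + 1)).inf' nonempty_range_add_one f ≤ f m :=
      inf'_le f (self_mem_range_succ m)
    have hstep_m := hstep m
    simp only [range_add_one (n := m + 1), filter_insert,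
      inf'_insert (s := range (m + 1)) nonempty_range_add_one]
    by_cases hrec : IsRecordMin f (m + 1)
    · have hlt := hrec_iff.1 hrec
      rw [if_pos hrec, card_insert_of_notMem (by simp), min_eq_left hlt.le]
      push_cast
      omega
    · have hge := not_lt.1 (mt hrec_iff.2 hrec)
      rw [if_neg hrec, min_eq_right hge, ih]

theorem inf'_range_add_eq_sub {f : ℕ → ℤ} {n k : ℕ} (hper : ∀ m, f (n + m) = f m - k)
    (hn : (range n).Nonempty) :
    (range (n + n)).inf' (hn.mono (range_mono (Nat.le_add_right n n))) f =
      (range n).inf' hn f - k := by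
  apply le_antisymm
  · obtain ⟨j, hj, hjmin⟩ := exists_mem_eq_inf' hn f
    calc (range (n + n)).inf' _ f ≤ f (n + j) :=
          inf'_le f (mem_range.2 (by have := mem_range.1 hj; omega))
      _ = _ := by rw [hper, hjmin]
  · refine le_inf' _ f fun b hb => ?_
    rcases lt_or_ge b n with hbn | hbn
    · have := inf'_le f (mem_range.2 hbn)
      omega
    · obtain ⟨b, rfl⟩ := Nat.exists_eq_add_of_le hbn
      have := inf'_le f (mem_range.2 (by have := mem_range.1 hb; omega : b < n))
      rw [hper]
      omega

open Classical in
theorem card_filter_isRecordMin_add {f : ℕ → ℤ} {n k : ℕ} (hstep : ∀ m, f m - 1 ≤ f (m + 1))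
    (hper : ∀ m, f (n + m) = f m - k) :
    ((range n).filter (fun i => IsRecordMin f (n + i))).card = k := by
  rcases Nat.eq_zero_or_pos n with rfl | hn
  · have hk : k = 0 := by
      have := hper 0
      rw [add_zero] at this
      omega
    simp [hk]
  obtain ⟨m, rfl⟩ : ∃ m, n = m + 1 := ⟨n - 1, by omega⟩
  have hsplit : ((range (m + 1 + (m + 1))).filter (IsRecordMin f)).card =
      ((range (m + 1)).filter (IsRecordMin f)).card +
        ((range (m + 1)).filter (fun i => IsRecordMin f (m + 1 + i))).card := by
    simp only [card_filter, sum_range_add]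
  have hfirst := card_isRecordMin_range_succ hstep m
  have htwo := card_isRecordMin_range_succ hstep (m + 1 + m)
  simp only [show m + 1 + m + 1 = m + 1 + (m + 1) by omega] at htwo
  rw [inf'_range_add_eq_sub hper nonempty_range_add_one] at htwo
  omega

def lukasiewicz (s : List ℕ) (m : ℕ) : ℤ :=
  ∑ j ∈ range m, ((s.getD (j % s.length) 0 : ℤ) - 1)

namespace lukasiewicz

variable (s : List ℕ)

theorem sub_one_le_succ (m : ℕ) : lukasiewicz s m - 1 ≤ lukasiewicz s (m + 1) := by
  simp only [lukasiewicz, sum_range_succ]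
  omega

theorem length_add (m : ℕ) :
    lukasiewicz s (s.length + m) = lukasiewicz s s.length + lukasiewicz s m := by
  simp only [lukasiewicz, sum_range_add, Nat.add_mod_left]

theorem eq_sum_take {ℓ : ℕ} (hℓ : ℓ ≤ s.length) :
    lukasiewicz s ℓ = ((s.take ℓ).sum : ℤ) - ℓ := by
  induction ℓ with
  | zero => simp [lukasiewicz]
  | succ ℓ ih =>
    have hℓ' : ℓ < s.length := hℓ
    rw [lukasiewicz, sum_range_succ, ← lukasiewicz, ih hℓ'.le, List.sum_take_succ _ _ hℓ',
      Nat.mod_eq_of_lt hℓ', List.getD_eq_getElem _ _ hℓ']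
    push_cast
    ring

theorem length_eq : lukasiewicz s s.length = s.sum - s.length := by
  rw [eq_sum_take s le_rfl, List.take_length]

theorem rotate (i m : ℕ) :
    lukasiewicz (s.rotate i) m = lukasiewicz s (i + m) - lukasiewicz s i := by
  rw [eq_sub_iff_add_eq', lukasiewicz, lukasiewicz, lukasiewicz, sum_range_add]
  congr 1
  refine sum_congr rfl fun j _ => ?_
  rcases Nat.eq_zero_or_pos s.length with hs | hpos
  · simp [List.length_eq_zero_iff.1 hs]
  rw [List.length_rotate, List.getD_eq_getElem _ _ (by simpa using Nat.mod_lt j hpos),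
    List.getD_eq_getElem _ _ (Nat.mod_lt _ hpos), List.getElem_rotate]
  congr 3
  simp [Nat.add_comm i j, Nat.add_mod]

end lukasiewicz

theorem lukasiewicz.length_add_eq_sub {s : List ℕ} {k : ℕ} (hsum : s.sum + k = s.length)
    (m : ℕ) : lukasiewicz s (s.length + m) = lukasiewicz s m - k := by
  rw [length_add, length_eq]
  omega

theorem isForestDfs_rotate_iff {s : List ℕ} {k i : ℕ} (hsum : s.sum + k = s.length)
    (hi : i < s.length) :
    IsForestDfs k (s.rotate i) ↔ IsRecordMin (lukasiewicz s) (s.length + i) := by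
  have hper := lukasiewicz.length_add_eq_sub hsum
  have hwindow : ∀ ℓ < s.length, (ℓ < ((s.rotate i).take ℓ).sum + k ↔
      lukasiewicz s (s.length + i) < lukasiewicz s (i + ℓ)) := fun ℓ hℓ => by
    have := lukasiewicz.eq_sum_take (s.rotate i) (ℓ := ℓ) (by rw [List.length_rotate]; omega)
    rw [lukasiewicz.rotate] at this
    rw [hper]
    omega
  rw [IsForestDfs, (List.rotate_perm s i).sum_eq, List.length_rotate, and_iff_right hsum]
  constructor
  · intro hvalid j hj
    rcases le_or_gt i j with hij | hji
    · obtain ⟨ℓ, rfl⟩ := Nat.exists_eq_add_of_le hij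
      exact (hwindow ℓ (by omega)).1 (hvalid ℓ (by omega))
    -- before time `i`, compare with the value one period later, which is `k` lower
    · have := (hwindow (s.length + j - i) (by omega)).1 (hvalid _ (by omega))
      rw [show i + (s.length + j - i) = s.length + j by omega, hper j] at this
      omega
  · exact fun hrec ℓ hℓ => (hwindow ℓ hℓ).2 (hrec _ (by omega))

open Classical

/-- Among the `n` cyclic rotations of a sequence of `n` non-negative integers summing to
`n - k`, exactly `k` are depth-first-traversal offspring sequences of planted planar
forests with `k` trees, and distinct valid rotations give distinct forests. -/
theorem forest_rotation_count (n k : ℕ) (hk1 : 1 ≤ k) (hkn : k ≤ n)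
    (s : List ℕ) (hlen : s.length = n) (hsum : s.sum = n - k) :
    ((Finset.range n).filter (fun i =>
        ∃ F : List PTree, F.length = k ∧ forestDfs F = s.rotate i)).card = k ∧
      ∀ i ∈ Finset.range n, ∀ j ∈ Finset.range n, ∀ F G : List PTree,
        F.length = k → forestDfs F = s.rotate i →
        G.length = k → forestDfs G = s.rotate j →
        s.rotate i ≠ s.rotate j → F ≠ G := by
  subst hlen
  refine ⟨?_, ?_⟩
  · have hsum' : s.sum + k = s.length := by omega
    calc _ = ((range s.length).filter
          (fun i => IsRecordMin (lukasiewicz s) (s.length + i))).card := by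
          refine congrArg card (filter_congr fun i hi => ?_)
          rw [exists_forest_iff_isForestDfs, isForestDfs_rotate_iff hsum' (mem_range.1 hi)]
      _ = k := card_filter_isRecordMin_add (lukasiewicz.sub_one_le_succ s)
          (lukasiewicz.length_add_eq_sub hsum')
  · rintro i - j - F G - hF - hG hne rfl
    exact hne (hF.symm.trans hG)
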